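/- arXiv:0811.2708 — 2 statements merged into one kernel-verified Lean document; each statement's English description precedes it below -/
import Mathlib

section
/- For all integers n ≥ 1 and ℓ, ℓ' ≥ 1, the dimension formula d_{ℓ,ℓ'} = n · ((ℓ+ℓ'+n)/(ℓ·ℓ')) · C(ℓ+n-1, ℓ-1) · C(ℓ'+n-1, ℓ'-1) defines a positive integer; equivalently, ℓ·ℓ' divides n·(ℓ+ℓ'+n)·C(ℓ+n-1, ℓ-1)·C(ℓ'+n-1, ℓ'-1). -/
/-!
Write `A = C(ℓ+n-1, ℓ-1)` and `B = C(ℓ'+n-1, ℓ'-1)`. The absorption identities for binomial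
coefficients give `ℓ ∣ n A`, `ℓ ∣ (ℓ+n) A` and likewise for `ℓ'`, `B`. Splitting
`ℓ + ℓ' + n = ℓ + (ℓ' + n)` writes the numerator as `ℓ · (n B) · A + (n A) · ((ℓ'+n) B)`,
and each summand is a product of a multiple of `ℓ` and a multiple of `ℓ'`.
-/

namespace Nat

theorem succ_dvd_sub_mul_choose (m k : ℕ) : k + 1 ∣ (m - k) * m.choose k :=
  ⟨m.choose (k + 1), by rw [mul_comm, ← choose_succ_right_eq, mul_comm]⟩

theorem succ_dvd_succ_mul_choose (m k : ℕ) : k + 1 ∣ (m + 1) * m.choose k :=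
  ⟨(m + 1).choose (k + 1), by rw [add_one_mul_choose_eq, mul_comm]⟩

end Nat

theorem stmt3_general (n ℓ ℓ' : ℕ) (h1 : 1 ≤ ℓ) (h2 : 1 ≤ ℓ') :
    ℓ * ℓ' ∣ n * (ℓ + ℓ' + n) * Nat.choose (ℓ + n - 1) (ℓ - 1)
      * Nat.choose (ℓ' + n - 1) (ℓ' - 1) := by
  have dvd_n_mul {l : ℕ} (hl : 1 ≤ l) : l ∣ n * (l + n - 1).choose (l - 1) := by
    simpa [Nat.sub_add_cancel hl, show l + n - 1 - (l - 1) = n by omega]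
      using Nat.succ_dvd_sub_mul_choose (l + n - 1) (l - 1)
  have dvd_add_mul {l : ℕ} (hl : 1 ≤ l) : l ∣ (l + n) * (l + n - 1).choose (l - 1) := by
    simpa [Nat.sub_add_cancel hl, show l + n - 1 + 1 = l + n by omega]
      using Nat.succ_dvd_succ_mul_choose (l + n - 1) (l - 1)
  have split : n * (ℓ + ℓ' + n) * (ℓ + n - 1).choose (ℓ - 1) * (ℓ' + n - 1).choose (ℓ' - 1)
      = ℓ * (n * (ℓ' + n - 1).choose (ℓ' - 1)) * (ℓ + n - 1).choose (ℓ - 1)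
        + (n * (ℓ + n - 1).choose (ℓ - 1)) * ((ℓ' + n) * (ℓ' + n - 1).choose (ℓ' - 1)) := by
    ring
  rw [split]
  exact (Dvd.dvd.mul_right (mul_dvd_mul dvd_rfl (dvd_n_mul h2)) _).add
    (mul_dvd_mul (dvd_n_mul h1) (dvd_add_mul h2))

/-- The dimension `d_{ℓ,ℓ'} = n ((ℓ+ℓ'+n)/(ℓℓ')) C(ℓ+n-1,ℓ-1) C(ℓ'+n-1,ℓ'-1)` of the
bigraded spherical harmonic space is a positive integer: `ℓ ℓ'` divides the numerator. -/
theorem stmt3 (n ℓ ℓ' : ℕ) (hn : 1 ≤ n) (h1 : 1 ≤ ℓ) (h2 : 1 ≤ ℓ') :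
    ℓ * ℓ' ∣ n * (ℓ + ℓ' + n) * Nat.choose (ℓ + n - 1) (ℓ - 1)
      * Nat.choose (ℓ' + n - 1) (ℓ' - 1) :=
  stmt3_general n ℓ ℓ' h1 h2
end

section
/- For each fixed integer n ≥ 1 and each x ∈ ℝ, with N → ∞ the Mehler–Heine limit holds: cos^{N - (n-1) - k}(x/√(N-(n-1)-k)) · P_k^{(n-1, N-(n-1)-k)}(cos(2x/√(N-(n-1)-k))) → L_k^{n-1}(x²) · e^{-x²/2}, where P_k^{(α,β)} is the Jacobi polynomial and L_k^{α} the Laguerre polynomial. -/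
/-!
Write `a = n - 1`, `c = N - (n - 1) - k` and `t = x / √c`, so that `c sin² t → x²`. Since
`cos 2t = 1 - 2 sin² t`, the `s`-th summand of the Jacobi polynomial is
`binom(a+k, k-s) binom(c+k, s) (-sin² t)^s (cos² t)^(k-s)`, and
`binom(c+k, s) sin^(2s) t = ∏_{i<s} (c+k-i) sin² t / s! → x^(2s) / s!`: term by term this gives
the Laguerre polynomial at `x²`. For the cosine power, `c log cos t ~ c (cos t - 1) =
-2 c sin² (t/2) → -x²/2`, and the natural-number exponent differs from `c` by a bounded amount.
-/
open Filter Finset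

/-- Generalized binomial coefficient `(a choose m) = a(a-1)⋯(a-m+1)/m!` for real `a`. -/
noncomputable def genBinom (a : ℝ) (m : ℕ) : ℝ :=
  (∏ i ∈ Finset.range m, (a - (i : ℝ))) / (m.factorial : ℝ)

/-- The Jacobi polynomial `P_k^{(a,b)}(x)`. -/
noncomputable def jacobiP (a b : ℝ) (k : ℕ) (x : ℝ) : ℝ :=
  ∑ s ∈ Finset.range (k + 1),
    genBinom (a + k) (k - s) * genBinom (b + k) s *
      ((x - 1) / 2) ^ s * ((x + 1) / 2) ^ (k - s)

/-- The generalized Laguerre polynomial `L_k^{a}(x)`. -/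
noncomputable def laguerreL (a : ℝ) (k : ℕ) (x : ℝ) : ℝ :=
  ∑ i ∈ Finset.range (k + 1),
    (-1 : ℝ) ^ i * genBinom (a + k) (k - i) * x ^ i / (i.factorial : ℝ)

open Real Topology

lemma tendsto_div_sqrt_atTop_zero (x : ℝ) : Tendsto (fun y : ℝ => x / √y) atTop (𝓝 0) :=
  tendsto_const_nhds.div_atTop tendsto_sqrt_atTop

lemma tendsto_mul_sin_div_sqrt_sq (x : ℝ) :
    Tendsto (fun y : ℝ => y * sin (x / √y) ^ 2) atTop (𝓝 (x ^ 2)) := by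
  have hsinc : Tendsto (fun y : ℝ => x ^ 2 * sinc (x / √y) ^ 2) atTop (𝓝 (x ^ 2)) := by
    simpa [sinc_zero] using
      (((continuous_sinc.tendsto 0).comp (tendsto_div_sqrt_atTop_zero x)).pow 2).const_mul (x ^ 2)
  refine hsinc.congr' ?_
  filter_upwards [eventually_gt_atTop 0] with y hy
  have hsqrt : √y ≠ 0 := (sqrt_pos.mpr hy).ne'
  rcases eq_or_ne x 0 with rfl | hx
  · simp
  rw [sinc_of_ne_zero (div_ne_zero hx hsqrt), div_pow, div_pow, sq_sqrt hy.le]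
  field_simp

lemma tendsto_mul_log_cos_div_sqrt (x : ℝ) :
    Tendsto (fun y : ℝ => y * log (cos (x / √y))) atTop (𝓝 (-(x ^ 2) / 2)) := by
  have h : Tendsto (fun y : ℝ => y * (cos (x / √y) - 1)) atTop (𝓝 (-(x ^ 2) / 2)) := by
    have := (tendsto_mul_sin_div_sqrt_sq (x / 2)).const_mul (-2)
    convert this using 2 with y
    · rw [show x / √y = 2 * (x / 2 / √y) by ring, cos_two_mul_eq_one_sub]
      ring
    · ring
  simpa using tendsto_mul_log_one_add_of_tendsto h

lemma tendsto_cos_div_sqrt_pow {α : Type*} {l : Filter α} {c : α → ℝ} {m : α → ℕ} {r : ℝ}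
    (hc : Tendsto c l atTop) (hm : Tendsto (fun i => (m i : ℝ) - c i) l (𝓝 r)) (x : ℝ) :
    Tendsto (fun i => cos (x / √(c i)) ^ m i) l (𝓝 (exp (-(x ^ 2) / 2))) := by
  have hcos : Tendsto (fun i => cos (x / √(c i))) l (𝓝 1) := by
    simpa [Function.comp_def] using
      ((continuous_cos.tendsto 0).comp (tendsto_div_sqrt_atTop_zero x)).comp hc
  have hlog : Tendsto (fun i => log (cos (x / √(c i)))) l (𝓝 0) := by
    simpa [Function.comp_def] using (continuousAt_log one_ne_zero).tendsto.comp hcos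
  have hmlog : Tendsto (fun i => m i * log (cos (x / √(c i)))) l (𝓝 (-(x ^ 2) / 2)) := by
    convert ((tendsto_mul_log_cos_div_sqrt x).comp hc).add (hm.mul hlog) using 2 with i
    · simp only [Function.comp_apply]
      ring
    · ring
  refine ((continuous_exp.tendsto _).comp hmlog).congr' ?_
  filter_upwards [hcos.eventually (eventually_gt_nhds one_pos)] with i hi
  rw [Function.comp_apply, exp_nat_mul, exp_log hi]

lemma genBinom_mul_pow (y u : ℝ) (s : ℕ) :
    genBinom y s * u ^ s = (∏ i ∈ range s, (y - i) * u) / s.factorial := by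
  rw [genBinom, prod_mul_distrib, prod_const, card_range]
  ring

lemma tendsto_genBinom_mul_pow {α : Type*} {l : Filter α} {y u : α → ℝ} {z : ℝ}
    (hyu : Tendsto (fun i => y i * u i) l (𝓝 z)) (hu : Tendsto u l (𝓝 0)) (s : ℕ) :
    Tendsto (fun i => genBinom (y i) s * u i ^ s) l (𝓝 (z ^ s / s.factorial)) := by
  have hfactor (j : ℕ) : Tendsto (fun i => (y i - j) * u i) l (𝓝 z) := by
    simpa [sub_mul] using hyu.sub (hu.const_mul (j : ℝ))
  have hprod := (tendsto_finsetProd (range s) fun j _ => hfactor j).div_const (s.factorial : ℝ)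
  rw [prod_const, card_range] at hprod
  simpa only [genBinom_mul_pow] using hprod

lemma tendsto_jacobiP_one_sub_two_mul {α : Type*} {l : Filter α} {b v : α → ℝ} {z : ℝ}
    (hbv : Tendsto (fun i => b i * v i) l (𝓝 z)) (hv : Tendsto v l (𝓝 0)) (a : ℝ) (k : ℕ) :
    Tendsto (fun i => jacobiP a (b i) k (1 - 2 * v i)) l (𝓝 (laguerreL a k z)) := by
  have hbkv : Tendsto (fun i => (b i + k) * v i) l (𝓝 z) := by
    simpa [add_mul] using hbv.add (hv.const_mul (k : ℝ))
  refine tendsto_finsetSum _ fun s _ => ?_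
  have hone_sub : Tendsto (fun i => (1 - v i) ^ (k - s)) l (𝓝 1) := by
    simpa using ((tendsto_const_nhds (x := (1 : ℝ))).sub hv).pow (k - s)
  have hterm := ((tendsto_genBinom_mul_pow hbkv hv s).const_mul
    (genBinom (a + k) (k - s) * (-1) ^ s)).mul hone_sub
  convert hterm using 2 with i <;> ring

theorem stmt12_general (n k : ℕ) (x : ℝ) :
    Tendsto (fun N : ℕ =>
        Real.cos (x / Real.sqrt ((N : ℝ) - ((n : ℝ) - 1) - (k : ℝ))) ^ (N - (n - 1) - k) *
          jacobiP ((n : ℝ) - 1) ((N : ℝ) - ((n : ℝ) - 1) - (k : ℝ)) k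
            (Real.cos (2 * x / Real.sqrt ((N : ℝ) - ((n : ℝ) - 1) - (k : ℝ)))))
      atTop
      (nhds (laguerreL ((n : ℝ) - 1) k (x ^ 2) * Real.exp (-(x ^ 2) / 2))) := by
  set c : ℕ → ℝ := fun N => (N : ℝ) - ((n : ℝ) - 1) - k
  have hc : Tendsto c atTop atTop := by
    refine (tendsto_atTop_add_const_right atTop (-((n : ℝ) - 1) - k)
      tendsto_natCast_atTop_atTop).congr fun N => ?_
    ring
  have hexponent : Tendsto (fun N => ((N - (n - 1) - k : ℕ) : ℝ) - c N) atTop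
      (𝓝 (((n : ℝ) - 1) - (n - 1 : ℕ))) := by
    -- `n - 1` truncates in `ℕ`: the difference is eventually `0` for `n ≥ 1` and `1` for `n = 0`
    refine tendsto_const_nhds.congr' ?_
    filter_upwards [eventually_ge_atTop (n - 1 + k)] with N hN
    rw [Nat.cast_sub (show k ≤ N - (n - 1) by omega), Nat.cast_sub (show n - 1 ≤ N by omega)]
    ring
  have hsin_sq : Tendsto (fun N => sin (x / √(c N)) ^ 2) atTop (𝓝 0) := by
    simpa [Function.comp_def] using
      (((continuous_sin.tendsto 0).comp (tendsto_div_sqrt_atTop_zero x)).comp hc).pow 2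
  have hjacobi := tendsto_jacobiP_one_sub_two_mul ((tendsto_mul_sin_div_sqrt_sq x).comp hc)
    hsin_sq ((n : ℝ) - 1) k
  rw [mul_comm (laguerreL _ _ _)]
  refine (tendsto_cos_div_sqrt_pow hc hexponent x).mul (hjacobi.congr fun N => ?_)
  rw [mul_div_assoc, cos_two_mul_eq_one_sub]

/-- The Mehler–Heine limit: with `j - k = n - 1` fixed,
`cos^{N-(n-1)-k}(x/√(N-(n-1)-k)) P_k^{(n-1, N-(n-1)-k)}(cos(2x/√(N-(n-1)-k)))`
tends to `L_k^{n-1}(x²) e^{-x²/2}` as `N → ∞`. -/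
theorem stmt12 (n k : ℕ) (hn : 1 ≤ n) (x : ℝ) :
    Tendsto (fun N : ℕ =>
        Real.cos (x / Real.sqrt ((N : ℝ) - ((n : ℝ) - 1) - (k : ℝ))) ^ (N - (n - 1) - k) *
          jacobiP ((n : ℝ) - 1) ((N : ℝ) - ((n : ℝ) - 1) - (k : ℝ)) k
            (Real.cos (2 * x / Real.sqrt ((N : ℝ) - ((n : ℝ) - 1) - (k : ℝ)))))
      atTop
      (nhds (laguerreL ((n : ℝ) - 1) k (x ^ 2) * Real.exp (-(x ^ 2) / 2))) :=
  stmt12_general n k x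
end
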